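/- arXiv:1301.6495 — 2 statements merged into one kernel-verified Lean document; each statement's English description precedes it below -/
import Mathlib

section
/- Let p ∈ ℤ be a prime number. Every ideal I of 𝒪_D of norm p (i.e., with 𝒪_D/I having exactly p elements) is of the form [p; a + w] = (p,p)·ℤ + (a, a + d)·ℤ for some a ∈ ℤ with p ∣ a·(a + d). Conversely, every such ℤ-module [p; a + w] with p ∣ a·(a + d) is an ideal of 𝒪_D and is a prime ideal (of norm p). -/
/-
Ring homomorphisms `𝒪_D → R` correspond to elements `r ∈ R` with `r² = d r`, the image of `w`
(since `𝒪_D = ℤ[w]` with `w² = d w`). For `R = ℤ/p` write `r = -a`; then `r² = d r` says exactly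
`p ∣ a (a + d)`, and the kernel of `x + t w ↦ x - t a` is `[p; a + w]`. An ideal of norm `p` has
quotient a ring with `p` elements, i.e. `ℤ/p`, so it is such a kernel; conversely such a kernel is
prime, with quotient `ℤ/p`.
-/

/-- The quadratic order `𝒪_D` of square discriminant `D = d²`,
realized as the subring `{(x,y) ∈ ℤ × ℤ : x ≡ y (mod d)}` of `ℤ × ℤ`. -/
def Od (d : ℤ) : Subring (ℤ × ℤ) where
  carrier := {z | d ∣ z.1 - z.2}
  one_mem' := by simp
  zero_mem' := by simp
  mul_mem' := by
    rintro a b ha hb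
    show d ∣ a.1 * b.1 - a.2 * b.2
    have h : a.1 * b.1 - a.2 * b.2 = (a.1 - a.2) * b.1 + a.2 * (b.1 - b.2) := by ring
    rw [h]
    exact dvd_add (ha.mul_right b.1) (hb.mul_left a.2)
  add_mem' := by
    rintro a b ha hb
    show d ∣ a.1 + b.1 - (a.2 + b.2)
    have h : a.1 + b.1 - (a.2 + b.2) = (a.1 - a.2) + (b.1 - b.2) := by ring
    rw [h]
    exact dvd_add ha hb
  neg_mem' := by
    rintro a ha
    show d ∣ -a.1 - -a.2
    have h : -a.1 - -a.2 = -(a.1 - a.2) := by ring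
    rw [h]
    exact ha.neg_right

lemma mem_Od {d : ℤ} {z : ℤ × ℤ} : z ∈ Od d ↔ d ∣ z.1 - z.2 := Iff.rfl

/-- The element `w = (0, d)` of the standard basis of `𝒪_D`. -/
def wd (d : ℤ) : Od d := ⟨(0, d), mem_Od.mpr ⟨-1, by ring⟩⟩

/-- The element `a·1 + w = (a, a + d)` of `𝒪_D`. -/
def awd (d a : ℤ) : Od d := ⟨(a, a + d), mem_Od.mpr ⟨-1, by ring⟩⟩

theorem Ideal.exists_zmod_ker_eq_of_natCard_quotient {R : Type*} [CommRing R] (I : Ideal R)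
    {p : ℕ} (hp : p.Prime) (hI : Nat.card (R ⧸ I) = p) :
    ∃ ψ : R →+* ZMod p, RingHom.ker ψ = I := by
  have : Finite (R ⧸ I) := Nat.finite_of_card_ne_zero (hI ▸ hp.ne_zero)
  let : Fintype (R ⧸ I) := Fintype.ofFinite _
  let e := ZMod.ringEquivOfPrime (R ⧸ I) hp (Nat.card_eq_fintype_card (α := R ⧸ I) ▸ hI)
  exact ⟨e.symm.toRingHom.comp (Ideal.Quotient.mk I), by
    rw [RingHom.ker_equiv_comp, Ideal.mk_ker]⟩

lemma dvd_mul_add_iff_neg_mul_neg_eq (p : ℕ) (a d : ℤ) :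
    (p : ℤ) ∣ a * (a + d) ↔ (-a : ZMod p) * -a = d * -a := by
  rw [← ZMod.intCast_zmod_eq_zero_iff_dvd]
  push_cast
  constructor <;> intro h <;> linear_combination h

namespace Od

variable {d : ℤ}

/-- The coordinate `t` in `z = x·1 + t·w`. -/
def coordW (z : Od d) : ℤ := ((z : ℤ × ℤ).2 - (z : ℤ × ℤ).1) / d

lemma snd_sub_fst (z : Od d) : (z : ℤ × ℤ).2 - (z : ℤ × ℤ).1 = coordW z * d :=
  (Int.ediv_mul_cancel (dvd_sub_comm.mp z.2)).symm

lemma coordW_eq (hd : d ≠ 0) {z : Od d} {t : ℤ}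
    (h : (z : ℤ × ℤ).2 - (z : ℤ × ℤ).1 = t * d) : coordW z = t :=
  Int.ediv_eq_of_eq_mul_left hd h

lemma coordW_add (hd : d ≠ 0) (z z' : Od d) : coordW (z + z') = coordW z + coordW z' := by
  apply coordW_eq hd
  have h := snd_sub_fst z
  have h' := snd_sub_fst z'
  simp only [Subring.coe_add, Prod.fst_add, Prod.snd_add]
  linear_combination h + h'

lemma coordW_mul (hd : d ≠ 0) (z z' : Od d) :
    coordW (z * z') = (z : ℤ × ℤ).1 * coordW z' + coordW z * (z' : ℤ × ℤ).1
      + coordW z * coordW z' * d := by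
  apply coordW_eq hd
  have h := snd_sub_fst z
  have h' := snd_sub_fst z'
  simp only [Subring.coe_mul, Prod.fst_mul, Prod.snd_mul]
  linear_combination (z' : ℤ × ℤ).2 * h + ((z : ℤ × ℤ).1 + coordW z * d) * h'

lemma eq_fst_add_coordW_mul_wd (z : Od d) :
    z = ((z : ℤ × ℤ).1 : Od d) + (coordW z : Od d) * wd d := by
  have h := snd_sub_fst z
  ext
  · simp [wd]
  · simp only [wd, Subring.coe_add, SubringClass.coe_intCast, Subring.coe_mul, Prod.snd_add,
      Prod.snd_intCast, Int.cast_eq, Prod.snd_mul]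
    linarith

lemma wd_mul_wd : wd d * wd d = (d : Od d) * wd d := by
  ext <;> simp [wd]

lemma map_eq {R : Type*} [Ring R] (ψ : Od d →+* R) (z : Od d) :
    ψ z = ((z : ℤ × ℤ).1 : R) + (coordW z : R) * ψ (wd d) := by
  conv_lhs => rw [eq_fst_add_coordW_mul_wd z]
  simp only [map_add, map_mul, map_intCast]

lemma map_wd_mul_map_wd {R : Type*} [Ring R] (ψ : Od d →+* R) :
    ψ (wd d) * ψ (wd d) = d * ψ (wd d) := by
  rw [← map_mul, wd_mul_wd, map_mul, map_intCast]

def lift (hd : d ≠ 0) {R : Type*} [CommRing R] (r : R) (hr : r * r = d * r) : Od d →+* R where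
  toFun z := ((z : ℤ × ℤ).1 : R) + (coordW z : R) * r
  map_one' := by
    have h : coordW (1 : Od d) = 0 := coordW_eq hd (by simp)
    simp [h]
  map_zero' := by
    have h : coordW (0 : Od d) = 0 := coordW_eq hd (by simp)
    simp [h]
  map_add' z z' := by
    simp only [coordW_add hd, Subring.coe_add, Prod.fst_add, Int.cast_add]
    ring
  map_mul' z z' := by
    simp only [coordW_mul hd, Subring.coe_mul, Prod.fst_mul, Int.cast_add, Int.cast_mul]
    linear_combination -(coordW z : R) * coordW z' * hr

lemma lift_wd (hd : d ≠ 0) {R : Type*} [CommRing R] (r : R) (hr : r * r = d * r) :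
    lift hd r hr (wd d) = r := by
  have hw : coordW (wd d) = 1 := coordW_eq hd (by simp [wd])
  show (((wd d : ℤ × ℤ).1 : ℤ) : R) + (coordW (wd d) : R) * r = r
  rw [hw]
  simp [wd]

lemma val_zsmul_natCast_add_zsmul_awd (p : ℕ) (a u v : ℤ) :
    ((u • (p : Od d) + v • awd d a : Od d) : ℤ × ℤ) = (u * p + v * a, u * p + v * a + v * d) := by
  ext
  · simp [awd]
  · simp only [zsmul_eq_mul, awd, Subring.coe_add, Subring.coe_mul, SubringClass.coe_intCast,
      SubringClass.coe_natCast, Prod.snd_add, Prod.snd_mul, Prod.snd_intCast, Int.cast_eq,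
      Prod.snd_natCast]
    ring

lemma exists_zsmul_add_zsmul_awd_iff (hd : d ≠ 0) (p : ℕ) (a : ℤ) (z : Od d) :
    (∃ u v : ℤ, z = u • (p : Od d) + v • awd d a) ↔ (p : ℤ) ∣ (z : ℤ × ℤ).1 - coordW z * a := by
  constructor
  · rintro ⟨u, v, rfl⟩
    have hv : coordW (u • (p : Od d) + v • awd d a) = v :=
      coordW_eq hd (by rw [val_zsmul_natCast_add_zsmul_awd]; ring)
    rw [hv, val_zsmul_natCast_add_zsmul_awd]
    exact ⟨u, by ring⟩
  · rintro ⟨u, hu⟩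
    have h := snd_sub_fst z
    refine ⟨u, coordW z, Subtype.ext ?_⟩
    rw [val_zsmul_natCast_add_zsmul_awd]
    ext <;> dsimp only <;> linarith

lemma coe_ker_eq (hd : d ≠ 0) {p : ℕ} (ψ : Od d →+* ZMod p) {a : ℤ} (ha : ψ (wd d) = -a) :
    (RingHom.ker ψ : Set (Od d)) = {x : Od d | ∃ u v : ℤ, x = u • (p : Od d) + v • awd d a} := by
  ext z
  rw [SetLike.mem_coe, RingHom.mem_ker, Set.mem_ofPred_eq, exists_zsmul_add_zsmul_awd_iff hd,
    ← ZMod.intCast_zmod_eq_zero_iff_dvd, map_eq, ha]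
  push_cast
  ring_nf

end Od

/-- Corollary A.8: every ideal of `𝒪_D` of norm a prime `p` is of the form
`[p; a + w] = (p,p)·ℤ + (a, a+d)·ℤ` with `p ∣ a·(a+d) = N(a·1 + w)`; conversely every such
`ℤ`-module is a prime ideal of `𝒪_D` of norm `p`. -/
theorem ideal_of_prime_norm (d : ℤ) (hd : 1 ≤ d) (p : ℕ) (hp : p.Prime) :
    (∀ I : Ideal (Od d), Nat.card (Od d ⧸ I) = p →
      ∃ a : ℤ, (p : ℤ) ∣ a * (a + d) ∧
        (I : Set (Od d)) = {x : Od d | ∃ u v : ℤ, x = u • (p : Od d) + v • awd d a}) ∧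
    (∀ a : ℤ, (p : ℤ) ∣ a * (a + d) →
      ∃ J : Ideal (Od d), J.IsPrime ∧ Nat.card (Od d ⧸ J) = p ∧
        (J : Set (Od d)) = {x : Od d | ∃ u v : ℤ, x = u • (p : Od d) + v • awd d a}) := by
  have hd0 : d ≠ 0 := by omega
  have : Fact p.Prime := ⟨hp⟩
  constructor
  · intro I hI
    obtain ⟨ψ, rfl⟩ := I.exists_zmod_ker_eq_of_natCard_quotient hp hI
    obtain ⟨a, ha⟩ := ZMod.intCast_surjective (-ψ (wd d))
    have ha' : ψ (wd d) = -a := by rw [ha, neg_neg]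
    refine ⟨a, ?_, Od.coe_ker_eq hd0 ψ ha'⟩
    exact (dvd_mul_add_iff_neg_mul_neg_eq p a d).mpr (ha' ▸ Od.map_wd_mul_map_wd ψ)
  · intro a hpa
    have hr := (dvd_mul_add_iff_neg_mul_neg_eq p a d).mp hpa
    let ψ := Od.lift hd0 (-a : ZMod p) hr
    refine ⟨RingHom.ker ψ, RingHom.ker_isPrime ψ, ?_, Od.coe_ker_eq hd0 ψ (Od.lift_wd hd0 _ hr)⟩
    rw [Nat.card_congr (RingHom.quotientKerEquivOfSurjective (ZMod.ringHom_surjective ψ)).toEquiv,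
      Nat.card_zmod]
end

section
/- Let 𝔞 be a regular ideal of 𝒪_D. Then the reduction homomorphism SL₂(𝒪_D) → SL₂(𝒪_D/𝔞), given by reducing all matrix entries modulo 𝔞, is surjective, and its kernel is the principal congruence subgroup Γ^D(𝔞). Equivalently, the sequence 0 → Γ^D(𝔞) → SL₂(𝒪_D) → SL₂(𝒪_D/𝔞) → 0 is exact. -/
open Matrix

variable (R : Type*) [CommRing R]

/-- The Hecke congruence subgroup `Γ₀(𝔞)` of `SL₂(R)`: matrices whose lower-left entry
lies in the ideal `𝔞`. -/
def GammaZero (A : Ideal R) : Subgroup (Matrix.SpecialLinearGroup (Fin 2) R) where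
  carrier := {M | M.1 1 0 ∈ A}
  one_mem' := by
    show (1 : Matrix.SpecialLinearGroup (Fin 2) R).1 1 0 ∈ A
    simp
  mul_mem' := by
    rintro M N hM hN
    show (M * N).1 1 0 ∈ A
    have e : (M * N).1 1 0 = M.1 1 0 * N.1 0 0 + M.1 1 1 * N.1 1 0 := by
      simp [Matrix.SpecialLinearGroup.coe_mul, Matrix.mul_apply, Fin.sum_univ_two]
    rw [e]
    exact A.add_mem (A.mul_mem_right _ hM) (A.mul_mem_left _ hN)
  inv_mem' := by
    rintro M hM
    show (M⁻¹).1 1 0 ∈ A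
    rw [Matrix.SpecialLinearGroup.SL2_inv_expl M]
    simpa using A.neg_mem hM

/-- The congruence subgroup `Γ₁(𝔞)` of `SL₂(R)`: matrices whose lower-left entry and
whose diagonal entries minus `1` lie in the ideal `𝔞`. -/
def GammaOne (A : Ideal R) : Subgroup (Matrix.SpecialLinearGroup (Fin 2) R) where
  carrier := {M | M.1 1 0 ∈ A ∧ M.1 0 0 - 1 ∈ A ∧ M.1 1 1 - 1 ∈ A}
  one_mem' := by
    refine ⟨?_, ?_, ?_⟩ <;>
      · show _ ∈ A
        simp
  mul_mem' := by
    rintro M N ⟨hM0, hM1, hM2⟩ ⟨hN0, hN1, hN2⟩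
    have e : ∀ i j, (M * N).1 i j = M.1 i 0 * N.1 0 j + M.1 i 1 * N.1 1 j := by
      intro i j
      simp [Matrix.SpecialLinearGroup.coe_mul, Matrix.mul_apply, Fin.sum_univ_two]
    refine ⟨?_, ?_, ?_⟩
    · show (M * N).1 1 0 ∈ A
      rw [e]
      exact A.add_mem (A.mul_mem_right _ hM0) (A.mul_mem_left _ hN0)
    · show (M * N).1 0 0 - 1 ∈ A
      rw [e]
      have h : M.1 0 0 * N.1 0 0 + M.1 0 1 * N.1 1 0 - 1
          = (M.1 0 0 - 1) * N.1 0 0 + (N.1 0 0 - 1) + M.1 0 1 * N.1 1 0 := by ring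
      rw [h]
      exact A.add_mem (A.add_mem (A.mul_mem_right _ hM1) hN1) (A.mul_mem_left _ hN0)
    · show (M * N).1 1 1 - 1 ∈ A
      rw [e]
      have h : M.1 1 0 * N.1 0 1 + M.1 1 1 * N.1 1 1 - 1
          = (M.1 1 1 - 1) * N.1 1 1 + (N.1 1 1 - 1) + M.1 1 0 * N.1 0 1 := by ring
      rw [h]
      exact A.add_mem (A.add_mem (A.mul_mem_right _ hM2) hN2) (A.mul_mem_right _ hM0)
  inv_mem' := by
    rintro M ⟨hM0, hM1, hM2⟩
    rw [Set.mem_setOf_eq, Matrix.SpecialLinearGroup.SL2_inv_expl M]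
    refine ⟨?_, ?_, ?_⟩
    · simpa using A.neg_mem hM0
    · simpa using hM2
    · simpa using hM1

/-- The principal congruence subgroup `Γ(𝔞)` of `SL₂(R)`: matrices congruent to the
identity matrix modulo the ideal `𝔞` (all entries of `M - 1` lie in `𝔞`). -/
def GammaFull (A : Ideal R) : Subgroup (Matrix.SpecialLinearGroup (Fin 2) R) where
  carrier := {M | M.1 0 0 - 1 ∈ A ∧ M.1 0 1 ∈ A ∧ M.1 1 0 ∈ A ∧ M.1 1 1 - 1 ∈ A}
  one_mem' := by
    refine ⟨?_, ?_, ?_, ?_⟩ <;>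
      · show _ ∈ A
        simp
  mul_mem' := by
    rintro M N ⟨hM1, hM2, hM3, hM4⟩ ⟨hN1, hN2, hN3, hN4⟩
    have e : ∀ i j, (M * N).1 i j = M.1 i 0 * N.1 0 j + M.1 i 1 * N.1 1 j := by
      intro i j
      simp [Matrix.SpecialLinearGroup.coe_mul, Matrix.mul_apply, Fin.sum_univ_two]
    refine ⟨?_, ?_, ?_, ?_⟩
    · show (M * N).1 0 0 - 1 ∈ A
      rw [e]
      have h : M.1 0 0 * N.1 0 0 + M.1 0 1 * N.1 1 0 - 1
          = (M.1 0 0 - 1) * N.1 0 0 + (N.1 0 0 - 1) + M.1 0 1 * N.1 1 0 := by ring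
      rw [h]
      exact A.add_mem (A.add_mem (A.mul_mem_right _ hM1) hN1) (A.mul_mem_left _ hN3)
    · show (M * N).1 0 1 ∈ A
      rw [e]
      exact A.add_mem (A.mul_mem_left _ hN2) (A.mul_mem_right _ hM2)
    · show (M * N).1 1 0 ∈ A
      rw [e]
      exact A.add_mem (A.mul_mem_right _ hM3) (A.mul_mem_left _ hN3)
    · show (M * N).1 1 1 - 1 ∈ A
      rw [e]
      have h : M.1 1 0 * N.1 0 1 + M.1 1 1 * N.1 1 1 - 1
          = (M.1 1 1 - 1) * N.1 1 1 + (N.1 1 1 - 1) + M.1 1 0 * N.1 0 1 := by ring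
      rw [h]
      exact A.add_mem (A.add_mem (A.mul_mem_right _ hM4) hN4) (A.mul_mem_right _ hM3)
  inv_mem' := by
    rintro M ⟨hM1, hM2, hM3, hM4⟩
    rw [Set.mem_setOf_eq, Matrix.SpecialLinearGroup.SL2_inv_expl M]
    refine ⟨?_, ?_, ?_, ?_⟩
    · simpa using hM4
    · simpa using A.neg_mem hM2
    · simpa using A.neg_mem hM3
    · simpa using hM1

/-! A regular ideal `𝔞` contains some `z` with `z₁ z₂ ≠ 0`, hence the nonzero integer
`z · (z₂, z₁) = z₁ z₂`; since `𝒪_D` is a finitely generated abelian group, `𝒪_D/𝔞` is finite,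
in particular semilocal. A semilocal ring has stable range one, so any matrix of `SL₂` acquires
a unit lower-left entry after multiplication by a lower transvection, and then it is a product
of three transvections. Transvections lift along any surjective ring map, hence so does `SL₂`.
The kernel of the reduction is `Γ(𝔞)` entry by entry. -/

theorem IsCoprime.exists_isUnit_add_mul {R : Type*} [CommRing R] [Finite (MaximalSpectrum R)]
    {a c : R} (h : IsCoprime a c) : ∃ t, IsUnit (a + t * c) := by
  classical
  -- Chinese remainder theorem: `t ≡ 1` modulo the maximal ideals containing `a`, `t ≡ 0` modulo
  -- the others.
  obtain ⟨t, ht⟩ := Ideal.exists_forall_sub_mem_ideal (I := MaximalSpectrum.asIdeal (R := R))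
    (fun _ _ hPQ ↦ MaximalSpectrum.isCoprime_of_ne hPQ) (fun P ↦ if a ∈ P.asIdeal then 1 else 0)
  refine ⟨t, by_contra fun hu ↦ ?_⟩
  obtain ⟨P, hP, hmem⟩ := exists_max_ideal_of_mem_nonunits hu
  have htP := ht ⟨P, hP⟩
  by_cases ha : a ∈ P
  · simp only [ha, if_true] at htP
    have hc : c ∈ P := by
      convert P.sub_mem (P.sub_mem hmem ha) (P.mul_mem_right c htP) using 1
      ring
    obtain ⟨u, v, huv⟩ := h
    exact hP.ne_top <| P.eq_top_iff_one.mpr <|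
      huv ▸ P.add_mem (P.mul_mem_left u ha) (P.mul_mem_left v hc)
  · simp only [ha, if_false, sub_zero] at htP
    exact ha (by simpa using P.sub_mem hmem (P.mul_mem_right c htP))

namespace Matrix.SpecialLinearGroup

variable {R S : Type*} [CommRing R] [CommRing S]

theorem map_transvection {ι : Type*} [Fintype ι] [DecidableEq ι] (f : R →+* S) {i j : ι}
    (hij : i ≠ j) (b : R) : map f (transvection hij b) = transvection hij (f b) := by
  ext k l
  simp [transvection_coe, one_apply, single_apply, apply_ite f]

theorem coe_transvection_zero_one (b : R) :
    (transvection (zero_ne_one' (Fin 2)) b : Matrix (Fin 2) (Fin 2) R) = !![1, b; 0, 1] := by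
  ext i j
  fin_cases i <;> fin_cases j <;> simp [transvection_coe]

theorem coe_transvection_one_zero (b : R) :
    (transvection (one_ne_zero' (Fin 2)) b : Matrix (Fin 2) (Fin 2) R) = !![1, 0; b, 1] := by
  ext i j
  fin_cases i <;> fin_cases j <;> simp [transvection_coe]

theorem fin_two_eq_transvection_mul_of_isUnit (M : SpecialLinearGroup (Fin 2) R)
    (u : Rˣ) (hu : (u : R) = M 1 0) :
    M = transvection (zero_ne_one' (Fin 2)) ((M 0 0 - 1) * ↑u⁻¹) *
      transvection (one_ne_zero' (Fin 2)) (M 1 0) *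
      transvection (zero_ne_one' (Fin 2)) ((M 1 1 - 1) * ↑u⁻¹) := by
  have hdet : M 0 0 * M 1 1 - M 0 1 * M 1 0 = 1 := by rw [← det_fin_two, M.det_coe]
  have hinv : (↑u⁻¹ : R) * M 1 0 = 1 := by rw [← hu, Units.inv_mul]
  ext i j
  simp only [coe_mul, coe_transvection_zero_one, coe_transvection_one_zero, mul_fin_two]
  fin_cases i <;> fin_cases j <;>
    simp only [Fin.zero_eta, Fin.mk_one, Fin.isValue, mul_one, mul_zero, zero_add, add_zero,
      one_mul, of_apply, cons_val', cons_val_zero, cons_val_one, cons_val_fin_one]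
  · linear_combination -(M 0 0 - 1) * hinv
  · linear_combination (-(M 0 1 + (↑u⁻¹ : R) * (M 1 1 - 1) * (M 0 0 - 1))) * hinv
      - (↑u⁻¹ : R) * hdet
  · linear_combination -(M 1 1 - 1) * hinv

theorem mem_closure_transvection_fin_two [Finite (MaximalSpectrum R)]
    (M : SpecialLinearGroup (Fin 2) R) :
    M ∈ Subgroup.closure {g | ∃ (i j : Fin 2) (hij : i ≠ j) (b : R), transvection hij b = g} := by
  set H := Subgroup.closure {g | ∃ (i j : Fin 2) (hij : i ≠ j) (b : R), transvection hij b = g}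
  have hT {i j : Fin 2} (hij : i ≠ j) (b : R) : transvection hij b ∈ H :=
    Subgroup.subset_closure ⟨i, j, hij, b, rfl⟩
  have hdet : M 0 0 * M 1 1 - M 0 1 * M 1 0 = 1 := by rw [← det_fin_two, M.det_coe]
  obtain ⟨t, u, hu⟩ := IsCoprime.exists_isUnit_add_mul (a := M 1 0) (c := M 0 0)
    ⟨-M 0 1, M 1 1, by linear_combination hdet⟩
  set N := transvection (one_ne_zero' (Fin 2)) t * M
  have hN : (u : R) = N 1 0 := by
    rw [hu]
    simp only [N, coe_mul, coe_transvection_one_zero, mul_apply, Fin.sum_univ_two, of_apply,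
      cons_val', cons_val_zero, cons_val_one, cons_val_fin_one, one_mul]
    ring
  have hNH : N ∈ H := by
    rw [fin_two_eq_transvection_mul_of_isUnit N u hN]
    exact H.mul_mem (H.mul_mem (hT _ _) (hT _ _)) (hT _ _)
  simpa [N] using H.mul_mem (H.inv_mem (hT (one_ne_zero' (Fin 2)) t)) hNH

theorem map_surjective_fin_two [Finite (MaximalSpectrum S)] {f : R →+* S}
    (hf : Function.Surjective f) : Function.Surjective (map (n := Fin 2) f) := by
  refine MonoidHom.range_eq_top.mp (eq_top_iff.mpr fun M _ ↦ ?_)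
  refine Subgroup.closure_le _ |>.mpr ?_ (mem_closure_transvection_fin_two M)
  rintro _ ⟨i, j, hij, b, rfl⟩
  obtain ⟨a, rfl⟩ := hf b
  exact ⟨_, map_transvection f hij a⟩

end Matrix.SpecialLinearGroup

theorem ker_map_quotient_mk_eq_GammaFull {R : Type*} [CommRing R] (A : Ideal R) :
    (SpecialLinearGroup.map (Ideal.Quotient.mk A) :
      SpecialLinearGroup (Fin 2) R →* SpecialLinearGroup (Fin 2) (R ⧸ A)).ker = GammaFull R A := by
  ext M
  rw [MonoidHom.mem_ker, Matrix.SpecialLinearGroup.ext_iff]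
  simp [GammaFull, Fin.forall_fin_two, one_apply, Ideal.Quotient.eq_zero_iff_mem,
    ← Ideal.Quotient.eq, and_assoc]

theorem Ideal.finite_quotient_of_intCast_mem {R : Type*} [CommRing R] [Module.Finite ℤ R]
    {I : Ideal R} {n : ℤ} (hn : n ≠ 0) (hnI : (n : R) ∈ I) : Finite (R ⧸ I) := by
  refine Module.finite_of_fg_torsion _ fun x ↦ ⟨⟨n, mem_nonZeroDivisors_of_ne_zero hn⟩, ?_⟩
  rw [Submonoid.mk_smul, zsmul_eq_mul, ← map_intCast (Ideal.Quotient.mk I),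
    Ideal.Quotient.eq_zero_iff_mem.mpr hnI, zero_mul]

instance Od.instModuleFiniteInt (d : ℤ) : Module.Finite ℤ (Od d) :=
  Module.Finite.of_injective (Od d).subtype.toIntAlgHom.toLinearMap Subtype.val_injective

theorem Od.exists_intCast_mem {d : ℤ} {A : Ideal (Od d)}
    (hreg : ∃ z ∈ A, ((z : ℤ × ℤ)) ∈ nonZeroDivisors (ℤ × ℤ)) :
    ∃ n : ℤ, n ≠ 0 ∧ (n : Od d) ∈ A := by
  obtain ⟨z, hzA, hz⟩ := hreg
  let zbar : Od d := ⟨(z : ℤ × ℤ).swap, mem_Od.mpr (dvd_sub_comm.mp z.2)⟩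
  have hprod : z * zbar = (((z : ℤ × ℤ).1 * (z : ℤ × ℤ).2 : ℤ) : Od d) := by
    ext <;> simp [zbar, mul_comm]
  refine ⟨_, fun h0 ↦ nonZeroDivisors.ne_zero hz ?_, hprod ▸ A.mul_mem_right zbar hzA⟩
  have : (z : ℤ × ℤ).swap = 0 := hz.1 _ (by ext <;> simp [h0, mul_comm])
  simpa using congrArg Prod.swap this

theorem reduction_surjective_ker_eq_gamma_general (d : ℤ) (A : Ideal (Od d))
    (hreg : ∃ z ∈ A, ((z : ℤ × ℤ)) ∈ nonZeroDivisors (ℤ × ℤ)) :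
    Function.Surjective (Matrix.SpecialLinearGroup.map (Ideal.Quotient.mk A) :
        Matrix.SpecialLinearGroup (Fin 2) (Od d) →*
          Matrix.SpecialLinearGroup (Fin 2) (Od d ⧸ A)) ∧
      MonoidHom.ker (Matrix.SpecialLinearGroup.map (Ideal.Quotient.mk A) :
        Matrix.SpecialLinearGroup (Fin 2) (Od d) →*
          Matrix.SpecialLinearGroup (Fin 2) (Od d ⧸ A)) = GammaFull (Od d) A := by
  obtain ⟨n, hn, hnA⟩ := Od.exists_intCast_mem hreg
  have : Finite (Od d ⧸ A) := Ideal.finite_quotient_of_intCast_mem hn hnA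
  exact ⟨SpecialLinearGroup.map_surjective_fin_two Ideal.Quotient.mk_surjective,
    ker_map_quotient_mk_eq_GammaFull A⟩

/-- Proposition 2.5: for a regular ideal `𝔞` of `𝒪_D`, the entrywise
reduction map `SL₂(𝒪_D) → SL₂(𝒪_D/𝔞)` is surjective and its kernel is the principal
congruence subgroup `Γ^D(𝔞)`; i.e. `0 → Γ^D(𝔞) → SL₂(𝒪_D) → SL₂(𝒪_D/𝔞) → 0` is exact. -/
theorem reduction_surjective_ker_eq_gamma (d : ℤ) (hd : 1 ≤ d) (A : Ideal (Od d))
    (hreg : ∃ z ∈ A, ((z : ℤ × ℤ)) ∈ nonZeroDivisors (ℤ × ℤ)) :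
    Function.Surjective (Matrix.SpecialLinearGroup.map (Ideal.Quotient.mk A) :
        Matrix.SpecialLinearGroup (Fin 2) (Od d) →*
          Matrix.SpecialLinearGroup (Fin 2) (Od d ⧸ A)) ∧
      MonoidHom.ker (Matrix.SpecialLinearGroup.map (Ideal.Quotient.mk A) :
        Matrix.SpecialLinearGroup (Fin 2) (Od d) →*
          Matrix.SpecialLinearGroup (Fin 2) (Od d ⧸ A)) = GammaFull (Od d) A :=
  reduction_surjective_ker_eq_gamma_general d A hreg
end
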